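/- Let m ≥ 2, 1 ≤ ℓ ≤ m, and let (f_1, …, f_ℓ) be a (2m, ℓ) bent vectorial function on GF(2^{2m}). Then the code C(f_1, …, f_ℓ) is spanned by its set of codewords of minimum Hamming weight 2^{2m−1} − 2^{m−1}. -/

import Mathlib

noncomputable section

/-- The finite field `GF(2^n)` is finite. -/
instance (n : ℕ) : Fintype (GaloisField 2 n) := Fintype.ofFinite _

/-- The absolute trace map from `GF(2^(2m))` to `GF(2)`. -/
def tr (m : ℕ) (x : GaloisField 2 (2*m)) : ZMod 2 :=
  Algebra.trace (ZMod 2) (GaloisField 2 (2*m)) x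

/-- A Boolean function `f : GF(2^(2m)) → GF(2)` is bent if all its Walsh
transform values have absolute value `2^m`. -/
def IsBent (m : ℕ) (f : GaloisField 2 (2*m) → ZMod 2) : Prop :=
  ∀ w : GaloisField 2 (2*m),
    |∑ x : GaloisField 2 (2*m), (-1 : ℤ) ^ ((f x + tr m (w * x)).val)| = 2 ^ m

/-- A tuple `(f 0, …, f (ℓ-1))` of Boolean functions on `GF(2^(2m))` is a
`(2m, ℓ)` bent vectorial function if every nonzero `GF(2)`-linear combination
of the `f j` is bent. -/
def IsBentVectorial (m ℓ : ℕ) (f : Fin ℓ → GaloisField 2 (2*m) → ZMod 2) : Prop :=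
  ∀ a : Fin ℓ → ZMod 2, a ≠ 0 → IsBent m (fun x => ∑ j, a j * f j x)

/-- The binary linear code `C(f 0, …, f (ℓ-1))` of length `2^(2m)` (with
coordinates indexed by `GF(2^(2m))`, a codeword being a function
`GF(2^(2m)) → GF(2)`, i.e. the truth table of a Boolean function), spanned by
the truth tables of the `f j`, the truth tables of the linear functions
`x ↦ tr (w * x)` for all `w`, and the all-one vector. -/
def code (m ℓ : ℕ) (f : Fin ℓ → GaloisField 2 (2*m) → ZMod 2) :
    Submodule (ZMod 2) (GaloisField 2 (2*m) → ZMod 2) :=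
  Submodule.span (ZMod 2)
    (Set.range f ∪ Set.range (fun w => fun x => tr m (w * x)) ∪ {fun _ => (1 : ZMod 2)})

/-- The Hamming weight of a codeword: the number of nonzero coordinates. -/
def wt (m : ℕ) (c : GaloisField 2 (2*m) → ZMod 2) : ℕ :=
  {x | c x ≠ 0}.ncard

/-- The support of a codeword: the set of coordinates where it is nonzero. -/
def supp (m : ℕ) (c : GaloisField 2 (2*m) → ZMod 2) : Set (GaloisField 2 (2*m)) :=
  {x | c x ≠ 0}

/-!
For a bent `g` and each `w`, exactly one of the two words `g + Tr(w ·)` and `g + Tr(w ·) + 1` has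
character sum `+2^m`, i.e. weight `2^(2m-1) - 2^(m-1)`; the constant needed is the dual bent
function `g̃(w)`. Modulo the span of these words, `g` and every `Tr(w ·)` reduce to multiples of
the all-one word, and the all-one word is itself a sum of four of them as soon as `g̃` is not
affine. It is not: if `g̃(w) = Tr(v w) + e`, Walsh inversion at a point `x ≠ v` would give
`±2^(2m) = 0`.
-/

open Finset

lemma ZMod.eq_zero_of_ne_one {a : ZMod 2} (h : a ≠ 1) : a = 0 := by
  revert a; decide

lemma neg_one_pow_val_add (a b : ZMod 2) :
    (-1 : ℤ) ^ (a + b).val = (-1) ^ a.val * (-1) ^ b.val := by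
  rw [ZMod.val_add, ← neg_one_pow_eq_pow_mod_two, pow_add]

lemma sum_neg_one_pow_val {ι : Type*} [Fintype ι] (c : ι → ZMod 2) :
    ∑ i, (-1 : ℤ) ^ (c i).val = Fintype.card ι - 2 * {i | c i ≠ 0}.ncard := by
  classical
  have hsign : ∀ a : ZMod 2, (-1 : ℤ) ^ a.val = 1 - 2 * if a ≠ 0 then 1 else 0 := by decide
  simp only [hsign, sum_sub_distrib, ← mul_sum, sum_boole, sum_const, card_univ, nsmul_one,
    Set.ncard_eq_toFinset_card', Set.toFinset_ofPred]

section TraceCharacter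

variable {F : Type*} [Field F] [Fintype F] [Algebra (ZMod 2) F]

local notation "Tr" => Algebra.trace (ZMod 2) F

lemma sum_neg_one_pow_trace_mul_of_ne_zero {w : F} (hw : w ≠ 0) :
    ∑ x, (-1 : ℤ) ^ (Tr (w * x)).val = 0 := by
  obtain ⟨b, hb⟩ : ∃ b, Tr (w * b) = 1 := by
    by_contra! h
    refine hw ((traceForm_nondegenerate (ZMod 2) F).1 w fun x => ?_)
    exact ZMod.eq_zero_of_ne_one (h x)
  have hshift : ∑ x, (-1 : ℤ) ^ (Tr (w * x)).val = -∑ x, (-1 : ℤ) ^ (Tr (w * x)).val := by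
    conv_lhs => rw [← Equiv.sum_comp (Equiv.addRight b)]
    simp [mul_add, neg_one_pow_val_add, hb, ZMod.val_one]
  linarith

lemma exists_trace_mul_eq (φ : F →ₗ[ZMod 2] ZMod 2) : ∃ v : F, ∀ x, φ x = Tr (v * x) := by
  obtain ⟨v, hv⟩ := ((Algebra.traceForm (ZMod 2) F).toDual
    (traceForm_nondegenerate _ _)).surjective φ
  exact ⟨v, fun x => by simp [← hv, LinearMap.BilinForm.toDual_def]⟩

lemma exists_linearMap_of_add_add_add_eq_zero {V : Type*} [AddCommGroup V] [Module (ZMod 2) V]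
    (e : V → ZMod 2) (he : ∀ u v, e (u + v) + e u + e v + e 0 = 0) :
    ∃ φ : V →ₗ[ZMod 2] ZMod 2, ∀ x, e x = φ x + e 0 :=
  ⟨AddMonoidHom.toZModLinearMap 2 (AddMonoidHom.mk' (fun x => e x + e 0)
    fun u v => by grind), fun x => by
    simp only [AddMonoidHom.coe_toZModLinearMap, AddMonoidHom.mk'_apply]; grind⟩

def walsh (g : F → ZMod 2) (w : F) : ℤ :=
  ∑ x, (-1 : ℤ) ^ (g x + Tr (w * x)).val

lemma sum_walsh_mul_neg_one_pow (g : F → ZMod 2) (x : F) :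
    ∑ w, walsh g w * (-1) ^ (Tr (w * x)).val = Fintype.card F * (-1) ^ (g x).val := by
  calc ∑ w, walsh g w * (-1) ^ (Tr (w * x)).val
      = ∑ y, (-1) ^ (g y).val * ∑ w : F, (-1 : ℤ) ^ (Tr ((y + x) * w)).val := by
        simp only [walsh, sum_mul, mul_sum]
        rw [sum_comm]
        refine sum_congr rfl fun y _ => sum_congr rfl fun w _ => ?_
        rw [neg_one_pow_val_add, mul_comm _ w, mul_add, map_add, neg_one_pow_val_add]
        ring
    _ = Fintype.card F * (-1) ^ (g x).val := by
        rw [Fintype.sum_eq_single x fun y hy => ?_]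
        · simp [ZModModule.add_self, mul_comm]
        rw [sum_neg_one_pow_trace_mul_of_ne_zero fun h => hy ?_, mul_zero]
        rwa [add_eq_zero_iff_eq_neg, ZModModule.neg_eq_self] at h

-- For bent `g` this is the dual bent function `g̃`.
def walshSign (g : F → ZMod 2) (w : F) : ZMod 2 :=
  if 0 ≤ walsh g w then 0 else 1

lemma walsh_eq_neg_one_pow_walshSign_mul_abs (g : F → ZMod 2) (w : F) :
    walsh g w = (-1) ^ (walshSign g w).val * |walsh g w| := by
  unfold walshSign
  split_ifs with h
  · simp [abs_of_nonneg h]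
  · simp [abs_of_neg (not_le.1 h), ZMod.val_one]

lemma walshSign_ne_affine {g : F → ZMod 2} {c : ℤ} (hg : ∀ w, |walsh g w| = c) (v : F)
    (e : ZMod 2) : ¬ ∀ w, walshSign g w = Tr (v * w) + e := by
  intro h
  obtain ⟨x, hx⟩ := exists_ne v
  have hinv := sum_walsh_mul_neg_one_pow g x
  have hvanish : ∑ w, walsh g w * (-1) ^ (Tr (w * x)).val = 0 := by
    calc ∑ w, walsh g w * (-1) ^ (Tr (w * x)).val
        = c * (-1) ^ e.val * ∑ w, (-1 : ℤ) ^ (Tr ((v + x) * w)).val := by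
          rw [mul_sum]
          refine sum_congr rfl fun w _ => ?_
          rw [walsh_eq_neg_one_pow_walshSign_mul_abs, hg, h, add_mul, map_add,
            neg_one_pow_val_add, neg_one_pow_val_add, mul_comm w x]
          ring
      _ = 0 := by
          rw [sum_neg_one_pow_trace_mul_of_ne_zero fun h => hx ?_, mul_zero]
          rw [add_eq_zero_iff_eq_neg, ZModModule.neg_eq_self] at h
          exact h.symm
  rw [hvanish] at hinv
  have : (0 : ℤ) < Fintype.card F := by exact_mod_cast Fintype.card_pos
  rcases neg_one_pow_eq_or ℤ (g x).val with h1 | h1 <;> rw [h1] at hinv <;> linarith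

lemma exists_walshSign_add_add_add_eq_one {g : F → ZMod 2} {c : ℤ}
    (hg : ∀ w, |walsh g w| = c) :
    ∃ u v, walshSign g (u + v) + walshSign g u + walshSign g v + walshSign g 0 = 1 := by
  by_contra! h
  obtain ⟨φ, hφ⟩ := exists_linearMap_of_add_add_add_eq_zero _ fun u v =>
    ZMod.eq_zero_of_ne_one (h u v)
  obtain ⟨v, hv⟩ := exists_trace_mul_eq φ
  exact walshSign_ne_affine hg v _ fun w => by rw [hφ, hv]

def walshShift (g : F → ZMod 2) (w : F) : F → ZMod 2 :=
  fun x => g x + Tr (w * x) + walshSign g w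

lemma sum_neg_one_pow_walshShift (g : F → ZMod 2) (w : F) :
    ∑ x, (-1 : ℤ) ^ (walshShift g w x).val = |walsh g w| := by
  have hsq : ∀ a : ZMod 2, (-1 : ℤ) ^ a.val * (-1) ^ a.val = 1 := by decide
  simp only [walshShift, neg_one_pow_val_add (_ + _), ← sum_mul]
  rw [← walsh]
  linear_combination (-1 : ℤ) ^ (walshSign g w).val * walsh_eq_neg_one_pow_walshSign_mul_abs g w
    + |walsh g w| * hsq (walshSign g w)

section Span

variable {g : F → ZMod 2} {c : ℤ} (hg : ∀ w, |walsh g w| = c)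
include hg

lemma one_mem_span_walshShift :
    (fun _ => 1) ∈ Submodule.span (ZMod 2) (Set.range (walshShift g)) := by
  obtain ⟨u, v, huv⟩ := exists_walshSign_add_add_add_eq_one hg
  have hone : (fun _ => 1) = walshShift g (u + v) + walshShift g u + walshShift g v
      + walshShift g 0 := by
    funext x
    simp only [walshShift, Pi.add_apply, add_mul, zero_mul, map_add, map_zero]
    grind
  rw [hone]
  refine add_mem (add_mem (add_mem ?_ ?_) ?_) ?_ <;> exact Submodule.subset_span ⟨_, rfl⟩

lemma mem_span_walshShift : g ∈ Submodule.span (ZMod 2) (Set.range (walshShift g)) := by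
  have hdecomp : g = walshShift g 0 + walshSign g 0 • fun _ => 1 := by
    funext x
    simp only [walshShift, Pi.add_apply, Pi.smul_apply, smul_eq_mul, zero_mul, map_zero]
    grind
  have hmem : walshShift g 0 + walshSign g 0 • (fun _ => 1 : F → ZMod 2)
      ∈ Submodule.span (ZMod 2) (Set.range (walshShift g)) :=
    add_mem (Submodule.subset_span ⟨0, rfl⟩)
      (Submodule.smul_mem _ _ (one_mem_span_walshShift hg))
  rwa [← hdecomp] at hmem

lemma trace_mul_mem_span_walshShift (w : F) :
    (fun x => Tr (w * x)) ∈ Submodule.span (ZMod 2) (Set.range (walshShift g)) := by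
  have hdecomp : (fun x => Tr (w * x)) = walshShift g w + walshShift g 0
      + (walshSign g w + walshSign g 0) • fun _ => 1 := by
    funext x
    simp only [walshShift, Pi.add_apply, Pi.smul_apply, smul_eq_mul, zero_mul, map_zero]
    grind
  rw [hdecomp]
  exact add_mem (add_mem (Submodule.subset_span ⟨w, rfl⟩) (Submodule.subset_span ⟨0, rfl⟩))
    (Submodule.smul_mem _ _ (one_mem_span_walshShift hg))

end Span

end TraceCharacter

section Code

variable {m ℓ : ℕ}

lemma IsBentVectorial.isBent {f : Fin ℓ → GaloisField 2 (2*m) → ZMod 2}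
    (hf : IsBentVectorial m ℓ f) (j : Fin ℓ) : IsBent m (f j) := by
  have hj := hf (Pi.single j 1) fun h => by simpa using congrFun h j
  simpa [Pi.single_apply] using hj

lemma wt_eq_of_sum_neg_one_pow (hm : 1 ≤ m) (c : GaloisField 2 (2*m) → ZMod 2)
    (hc : ∑ x, (-1 : ℤ) ^ (c x).val = 2 ^ m) : wt m c = 2 ^ (2*m-1) - 2 ^ (m-1) := by
  have hcard : Fintype.card (GaloisField 2 (2*m)) = 2 ^ (2*m) := by
    rw [← Nat.card_eq_fintype_card, GaloisField.card 2 (2*m) (by omega)]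
  rw [sum_neg_one_pow_val, hcard] at hc
  have h1 : 2 ^ (2*m) = 2 * 2 ^ (2*m-1) := by rw [← pow_succ']; congr 1; omega
  have h2 : 2 ^ m = 2 * 2 ^ (m-1) := by rw [← pow_succ']; congr 1; omega
  have hle : 2 ^ (m-1) ≤ 2 ^ (2*m-1) := Nat.pow_le_pow_right two_pos (by omega)
  unfold wt
  zify [hle] at hc ⊢
  linarith

lemma walshShift_mem_code {f : Fin ℓ → GaloisField 2 (2*m) → ZMod 2}
    {g : GaloisField 2 (2*m) → ZMod 2} (hg : g ∈ code m ℓ f) (w : GaloisField 2 (2*m)) :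
    walshShift g w ∈ code m ℓ f := by
  have htr : (fun x => tr m (w * x)) ∈ code m ℓ f :=
    Submodule.subset_span (Or.inl (Or.inr ⟨w, rfl⟩))
  have hone : (fun _ => 1) ∈ code m ℓ f := Submodule.subset_span (Or.inr rfl)
  convert add_mem (add_mem hg htr) (Submodule.smul_mem _ (walshSign g w) hone) using 1
  funext x
  simp [walshShift, tr]

lemma span_walshShift_le_span_minWeight (hm : 1 ≤ m)
    {f : Fin ℓ → GaloisField 2 (2*m) → ZMod 2} {g : GaloisField 2 (2*m) → ZMod 2}
    (hgC : g ∈ code m ℓ f) (hgB : IsBent m g) :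
    Submodule.span (ZMod 2) (Set.range (walshShift g))
      ≤ Submodule.span (ZMod 2) {c | c ∈ code m ℓ f ∧ wt m c = 2^(2*m-1) - 2^(m-1)} := by
  refine Submodule.span_mono ?_
  rintro _ ⟨w, rfl⟩
  refine ⟨walshShift_mem_code hgC w, wt_eq_of_sum_neg_one_pow hm _ ?_⟩
  rw [sum_neg_one_pow_walshShift]
  exact hgB w

end Code

theorem stmt_5_general (m ℓ : ℕ) (hm : 2 ≤ m) (hℓ1 : 1 ≤ ℓ)
    (f : Fin ℓ → GaloisField 2 (2*m) → ZMod 2) (hf : IsBentVectorial m ℓ f) :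
    Submodule.span (ZMod 2)
        {c | c ∈ code m ℓ f ∧ wt m c = 2^(2*m-1) - 2^(m-1)} = code m ℓ f := by
  have hf_mem (j : Fin ℓ) : f j ∈ code m ℓ f :=
    Submodule.subset_span (Or.inl (Or.inl ⟨j, rfl⟩))
  have hspan (j : Fin ℓ) :=
    span_walshShift_le_span_minWeight (by omega) (hf_mem j) (hf.isBent j)
  have hbent (j : Fin ℓ) : ∀ w, |walsh (f j) w| = 2 ^ m := hf.isBent j
  refine le_antisymm (Submodule.span_le.2 fun c hc => hc.1) (Submodule.span_le.2 ?_)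
  let j₀ : Fin ℓ := ⟨0, hℓ1⟩
  rintro c ((⟨j, rfl⟩ | ⟨w, rfl⟩) | rfl)
  · exact hspan j (mem_span_walshShift (hbent j))
  · exact hspan j₀ (trace_mul_mem_span_walshShift (hbent j₀) w)
  · exact hspan j₀ (one_mem_span_walshShift (hbent j₀))

/-- `C(f_1, …, f_ℓ)` is spanned by its minimum weight codewords. -/
theorem stmt_5 (m ℓ : ℕ) (hm : 2 ≤ m) (hℓ1 : 1 ≤ ℓ) (hℓm : ℓ ≤ m)
    (f : Fin ℓ → GaloisField 2 (2*m) → ZMod 2) (hf : IsBentVectorial m ℓ f) :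
    Submodule.span (ZMod 2)
        {c | c ∈ code m ℓ f ∧ wt m c = 2^(2*m-1) - 2^(m-1)} = code m ℓ f :=
  stmt_5_general m ℓ hm hℓ1 f hf
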